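/- arXiv:2505.08682 — 2 statements merged into one kernel-verified Lean document; each statement's English description precedes it below -/
import Mathlib

section
/- Feasibility of the rigid resource-allocation problem (P_rig): there exist K_dl ∈ (0, K − a·θ], and for every user s ∈ {1,…,S} numbers K_{s,ul} > 0, p_s ∈ (0, P_max], τ_s ∈ [τ_{s,min}, ∞) satisfying (i) ∑_{s=1}^S K_{s,ul} ≤ K − a·θ, (ii) min_{s} ( D / (K_dl·B·log(1 + P_d·γ_s)) + τ_s ) ≥ max_{s} D / (K_dl·B·log(1 + P_d·γ_s)), and (iii) for every s, κ·α_s³/τ_s² + p_s·D / ( K_{s,ul}·B·log(1 + p_s·γ_s/K_{s,ul}) ) ≤ E_s, IF AND ONLY IF K > a·θ and for every s ∈ {1,…,S}, D/(B·γ_s) < E_s. -/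
open Real Finset

/-!
With `x = p·γ/K_ul`, the uplink energy `p·D / (K_ul·B·log(1 + p·γ/K_ul))` equals
`D/(B·γ) · x / log(1 + x)`, and `1 < x / log(1 + x) ≤ 1 + x` for `x > 0`. Hence the uplink energy
always exceeds `D/(B·γ)`, which together with the nonnegative computation energy gives necessity.
Conversely it tends to `D/(B·γ)` as `p → 0`, the computation energy `κ·α³/τ²` vanishes as `τ → ∞`,
and the synchronisation constraint (ii) only asks each `τ_s` to be large enough; splitting the margin
`E_s - D/(B·γ_s)` evenly between the two energies gives a feasible point.
-/

theorem one_lt_div_log_one_add {x : ℝ} (hx : 0 < x) : 1 < x / log (1 + x) := by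
  have hlog : 0 < log (1 + x) := log_pos (by linarith)
  rw [one_lt_div hlog]
  linarith [log_lt_sub_one_of_pos (by linarith : 0 < 1 + x) (by linarith : 1 + x ≠ 1)]

theorem div_log_one_add_le {x : ℝ} (hx : 0 < x) : x / log (1 + x) ≤ 1 + x := by
  have hlog : 0 < log (1 + x) := log_pos (by linarith)
  rw [div_le_iff₀ hlog]
  calc x = (1 + x) * (1 - (1 + x)⁻¹) := by field_simp; ring
    _ ≤ (1 + x) * log (1 + x) :=
      mul_le_mul_of_nonneg_left (one_sub_inv_le_log_of_pos (by linarith)) (by linarith)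

theorem uplink_energy_eq (p D K B γ : ℝ) (hγ : γ ≠ 0) :
    p * D / (K * B * log (1 + p * γ / K)) =
      D / (B * γ) * (p * γ / K / log (1 + p * γ / K)) := by
  field_simp

theorem div_lt_uplink_energy {p D K B γ : ℝ} (hp : 0 < p) (hD : 0 < D) (hK : 0 < K)
    (hB : 0 < B) (hγ : 0 < γ) :
    D / (B * γ) < p * D / (K * B * log (1 + p * γ / K)) := by
  rw [uplink_energy_eq p D K B γ hγ.ne']
  exact lt_mul_of_one_lt_right (by positivity) (one_lt_div_log_one_add (by positivity))

theorem exists_power_uplink_energy_le {D K B γ Pmax ε : ℝ} (hD : 0 < D) (hK : 0 < K)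
    (hB : 0 < B) (hγ : 0 < γ) (hPmax : 0 < Pmax) (hε : 0 < ε) :
    ∃ p, 0 < p ∧ p ≤ Pmax ∧ p * D / (K * B * log (1 + p * γ / K)) ≤ D / (B * γ) + ε := by
  set L := D / (B * γ)
  have hL : 0 < L := by positivity
  obtain ⟨p, hp, hpmax, hpε⟩ : ∃ p, 0 < p ∧ p ≤ Pmax ∧ p ≤ K * ε / (L * γ) :=
    ⟨_, lt_min hPmax (by positivity), min_le_left _ _, min_le_right _ _⟩
  have hLx : L * (p * γ / K) ≤ ε := by
    rw [le_div_iff₀ (by positivity)] at hpε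
    rw [mul_div_assoc', div_le_iff₀ hK]
    linarith
  refine ⟨p, hp, hpmax, ?_⟩
  rw [uplink_energy_eq p D K B γ hγ.ne']
  calc L * (p * γ / K / log (1 + p * γ / K)) ≤ L * (1 + p * γ / K) :=
        mul_le_mul_of_nonneg_left (div_log_one_add_le (by positivity)) hL.le
    _ ≤ L + ε := by linarith

theorem div_sq_le_of_sqrt_div_le {c ε τ : ℝ} (hε : 0 < ε) (hτ : √(c / ε) ≤ τ) :
    c / τ ^ 2 ≤ ε := by
  obtain ⟨hτ0, hcτ⟩ := sqrt_le_iff.1 hτ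
  rcases hτ0.eq_or_lt with rfl | hτpos
  · simp [hε.le]
  · rw [div_le_iff₀ hε] at hcτ
    rw [div_le_iff₀ (by positivity)]
    linarith

theorem rigid_feasibility_general
    (S : ℕ)
    (D B Pd Pmax κ K a θ : ℝ)
    (γ E α τmin : Fin S → ℝ)
    (hD : 0 < D) (hB : 0 < B) (hPmax : 0 < Pmax)
    (hκ : 0 < κ)
    (hγ : ∀ s, 0 < γ s)
    (hα : ∀ s, 0 < α s) :
    (∃ (Kdl : ℝ) (Kul p τ : Fin S → ℝ),
      0 < Kdl ∧ Kdl ≤ K - a * θ ∧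
      (∀ s, 0 < Kul s) ∧
      (∀ s, 0 < p s ∧ p s ≤ Pmax) ∧
      (∀ s, τmin s ≤ τ s) ∧
      -- (i) uplink resource-block sharing
      (∑ s, Kul s) ≤ K - a * θ ∧
      -- (ii) downlink/uplink separation: min ≥ max
      (∀ s s' : Fin S,
        D / (Kdl * B * Real.log (1 + Pd * γ s)) + τ s ≥
          D / (Kdl * B * Real.log (1 + Pd * γ s'))) ∧
      -- (iii) energy budget
      (∀ s, κ * (α s) ^ 3 / (τ s) ^ 2 +
          p s * D / (Kul s * B * Real.log (1 + p s * γ s / Kul s)) ≤ E s))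
    ↔ (K > a * θ ∧ ∀ s, D / (B * γ s) < E s) := by
  constructor
  · rintro ⟨Kdl, Kul, p, τ, hKdl, hKdlle, hKul, hp, -, -, -, henergy⟩
    refine ⟨by linarith, fun s => ?_⟩
    have hcomp : 0 ≤ κ * α s ^ 3 / τ s ^ 2 := by have := hα s; positivity
    linarith [henergy s, div_lt_uplink_energy (hp s).1 hD (hKul s) hB (hγ s)]
  · rintro ⟨hKaθ, hLE⟩
    set Kdl := K - a * θ
    have hKdl : 0 < Kdl := sub_pos.2 hKaθ
    have hKul : ∀ s : Fin S, 0 < Kdl / S := fun s => div_pos hKdl (Nat.cast_pos.2 s.pos)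
    set ε := fun s => (E s - D / (B * γ s)) / 2
    have hε : ∀ s, 0 < ε s := fun s => half_pos (sub_pos.2 (hLE s))
    choose p hp hpmax hup using fun s =>
      exists_power_uplink_energy_le hD (hKul s) hB (hγ s) hPmax (hε s)
    set tdl := fun s => D / (Kdl * B * log (1 + Pd * γ s))
    obtain ⟨M, hM⟩ := Finite.bddAbove_range tdl
    set τ := fun s => max (τmin s) (max (M - tdl s) √(κ * α s ^ 3 / ε s))
    refine ⟨Kdl, fun _ => Kdl / S, p, τ, hKdl, le_rfl, hKul, fun s => ⟨hp s, hpmax s⟩,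
      fun s => le_max_left _ _, ?_, fun s s' => ?_, fun s => ?_⟩
    · rcases S.eq_zero_or_pos with rfl | hS
      · simpa using hKdl.le
      · rw [sum_const, card_univ, Fintype.card_fin, nsmul_eq_mul, mul_div_cancel₀ _ (by positivity)]
    · have hτ : M - tdl s ≤ τ s := (le_max_left _ _).trans (le_max_right _ _)
      linarith [hM (Set.mem_range_self s')]
    · have hcomp : κ * α s ^ 3 / τ s ^ 2 ≤ ε s :=
        div_sq_le_of_sqrt_div_le (hε s) ((le_max_right _ _).trans (le_max_right _ _))
      have hsplit : 2 * ε s = E s - D / (B * γ s) := mul_div_cancel₀ _ two_ne_zero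
      beta_reduce
      linarith [hup s]

/-- Feasibility condition for the rigid resource-allocation problem `(P_rig)`:
the problem is feasible iff `K > a·θ` and `D/(B·γ_s) < E_s` for every user `s`. -/
theorem rigid_feasibility
    (S : ℕ) (hS : 1 ≤ S)
    (D B Pd Pmax κ K a θ : ℝ)
    (γ E α τmin : Fin S → ℝ)
    (hD : 0 < D) (hB : 0 < B) (hPd : 0 < Pd) (hPmax : 0 < Pmax)
    (hκ : 0 < κ) (hK : 0 < K) (ha : 0 < a) (hθ : 0 < θ)
    (hγ : ∀ s, 0 < γ s) (hE : ∀ s, 0 < E s)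
    (hα : ∀ s, 0 < α s) (hτmin : ∀ s, 0 < τmin s) :
    (∃ (Kdl : ℝ) (Kul p τ : Fin S → ℝ),
      0 < Kdl ∧ Kdl ≤ K - a * θ ∧
      (∀ s, 0 < Kul s) ∧
      (∀ s, 0 < p s ∧ p s ≤ Pmax) ∧
      (∀ s, τmin s ≤ τ s) ∧
      -- (i) uplink resource-block sharing
      (∑ s, Kul s) ≤ K - a * θ ∧
      -- (ii) downlink/uplink separation: min ≥ max
      (∀ s s' : Fin S,
        D / (Kdl * B * Real.log (1 + Pd * γ s)) + τ s ≥
          D / (Kdl * B * Real.log (1 + Pd * γ s'))) ∧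
      -- (iii) energy budget
      (∀ s, κ * (α s) ^ 3 / (τ s) ^ 2 +
          p s * D / (Kul s * B * Real.log (1 + p s * γ s / Kul s)) ≤ E s))
    ↔ (K > a * θ ∧ ∀ s, D / (B * γ s) < E s) :=
  rigid_feasibility_general S D B Pd Pmax κ K a θ γ E α τmin hD hB hPmax hκ hγ hα
end

section
/- Feasibility of the session-based problem (P_σ): there exist nonnegative reals t^dl_1,…,t^dl_S, t^ul_1,…,t^ul_S, T_idle, K^dl_1,…,K^dl_S, K^dl_{HB,1},…,K^dl_{HB,S}, K^ul_{HB,1},…,K^ul_{HB,S}, and for all 1 ≤ s ≤ ℓ ≤ S reals K^ul_{s,ℓ} ≥ 0 and p^ul_{s,ℓ} ∈ [0, P_max], satisfying all constraints (16), (18), (19), (20), (21), (22), (24') of the session-based problem listed in the context, IF AND ONLY IF K > a·θ and for every s ∈ {1,…,S}, D < E_s·B·γ_s. -/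
open Real Finset Filter

/-!
Necessity. Since `k log (1 + x / k) ≤ x`, uplink data costs energy: user `s` needs
`∑ p t ≥ D / (B γ_s)`, and the computation energy is strictly positive, so `D < E_s B γ_s`.
Some uplink session carries data on a positive number of resource blocks, so there the
HB traffic gets strictly fewer than `K` blocks; as it gets at most `K` elsewhere, (24') forces
`a θ < K`.

Sufficiency. Reserve `a θ` blocks for HB traffic at all times and give the remaining
`c = K - a θ` blocks to one user per uplink session and to the downlink. At low power the
spectral efficiency per watt `c log (1 + p γ / c) / p` approaches `γ`, so a small power
uploads `D` with energy below `E_s`; the idle time is then taken large enough to meet the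
computation-time bounds and to make the computation energy fit the remaining budget.
-/

def SessionFeasible (S : ℕ) (σ : Equiv.Perm (Fin S)) (D B Pd Pmax κ K a θ : ℝ)
    (γ E α τmin : Fin S → ℝ) : Prop :=
  ∃ (tdl tul : Fin S → ℝ) (Tidle : ℝ)
     (Kdl KdlHB KulHB : Fin S → ℝ)
     (Kul pul : Fin S → Fin S → ℝ),
    (∀ ℓ', 0 ≤ tdl ℓ') ∧ (∀ ℓ, 0 ≤ tul ℓ) ∧ 0 ≤ Tidle ∧
    (∀ ℓ', 0 ≤ Kdl ℓ') ∧ (∀ ℓ', 0 ≤ KdlHB ℓ') ∧ (∀ ℓ, 0 ≤ KulHB ℓ) ∧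
    (∀ j ℓ : Fin S, j ≤ ℓ →
      0 ≤ Kul (σ j) ℓ ∧ 0 ≤ pul (σ j) ℓ ∧ pul (σ j) ℓ ≤ Pmax) ∧
    (∀ j : Fin S,
      (∑ ℓ ∈ Finset.Iio j, tul ℓ) + (∑ ℓ' ∈ Finset.Ioi (σ j), tdl ℓ') + Tidle
        ≥ τmin (σ j)) ∧
    (∀ m : Fin S,
      (∑ i ∈ Finset.Iic m, Kdl i * B * Real.log (1 + Pd * γ m) * tdl i) ≥ D) ∧
    (∀ m : Fin S, Kdl m + KdlHB m ≤ K) ∧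
    (∀ j : Fin S,
      (∑ ℓ ∈ Finset.Ici j,
        (Kul (σ j) ℓ * B *
          Real.log (1 + pul (σ j) ℓ * γ (σ j) / Kul (σ j) ℓ)) * tul ℓ) ≥ D) ∧
    (∀ ℓ : Fin S,
      (∑ j ∈ Finset.Iic ℓ, Kul (σ j) ℓ) + KulHB ℓ ≤ K) ∧
    (∀ j : Fin S,
      (∑ ℓ ∈ Finset.Ici j, pul (σ j) ℓ * tul ℓ) +
        κ * (α (σ j)) ^ 3 /
          ((∑ ℓ ∈ Finset.Iio j, tul ℓ) +
            (∑ ℓ' ∈ Finset.Ioi (σ j), tdl ℓ') + Tidle) ^ 2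
        ≤ E (σ j)) ∧
    ((∑ ℓ', KdlHB ℓ' * tdl ℓ') + (∑ ℓ, KulHB ℓ * tul ℓ) + K * Tidle ≥
      a * θ * ((∑ ℓ', tdl ℓ') + Tidle + (∑ ℓ, tul ℓ)))

theorem mul_log_one_add_div_le {k x : ℝ} (hk : 0 ≤ k) (hx : 0 ≤ x) :
    k * log (1 + x / k) ≤ x := by
  rcases hk.eq_or_lt with rfl | hk
  · simpa using hx
  · calc k * log (1 + x / k) ≤ k * (x / k) := by
          gcongr
          linarith [log_le_sub_one_of_pos (show 0 < 1 + x / k by positivity)]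
      _ = x := mul_div_cancel₀ x hk.ne'

theorem exists_mul_lt_mul_log_one_add_div {c γ q P : ℝ} (hc : 0 < c) (hq : 0 < q)
    (hqγ : q < γ) (hP : 0 < P) :
    ∃ p, 0 < p ∧ p ≤ P ∧ q * p < c * log (1 + p * γ / c) := by
  have hγ : 0 < γ := hq.trans hqγ
  obtain ⟨p, hp0, hp⟩ :=
    exists_between (lt_min hP (div_pos (mul_pos hc (sub_pos.mpr hqγ)) (mul_pos hq hγ)))
  refine ⟨p, hp0, (hp.trans_le (min_le_left _ _)).le, ?_⟩
  have hsmall : p * (q * γ) < c * (γ - q) :=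
    (lt_div_iff₀ (mul_pos hq hγ)).mp (hp.trans_le (min_le_right _ _))
  calc q * p < c * (p * γ) / (c + p * γ) := by
        rw [lt_div_iff₀ (by positivity)]
        nlinarith [mul_lt_mul_of_pos_left hsmall hp0]
    _ = c * (1 - (1 + p * γ / c)⁻¹) := by field_simp; ring
    _ ≤ c * log (1 + p * γ / c) := by
        gcongr
        exact one_sub_inv_le_log_of_pos (by positivity)

theorem exists_uplink_power_time {c B γ D E P : ℝ} (hc : 0 < c) (hB : 0 < B) (hγ : 0 < γ)
    (hD : 0 < D) (hP : 0 < P) (hDE : D < E * B * γ) :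
    ∃ p t, 0 < p ∧ p ≤ P ∧ 0 ≤ t ∧ D ≤ c * B * log (1 + p * γ / c) * t ∧ p * t < E := by
  have hE : 0 < E := pos_of_mul_pos_left (pos_of_mul_pos_left (hD.trans hDE) hγ.le) hB.le
  have hEB : 0 < E * B := mul_pos hE hB
  obtain ⟨p, hp0, hpP, hp⟩ := exists_mul_lt_mul_log_one_add_div (γ := γ) hc (div_pos hD hEB)
    ((div_lt_iff₀ hEB).mpr (by linarith)) hP
  set R := c * B * log (1 + p * γ / c)
  have hER : D * p < E * R := calc
    D * p = E * B * (D / (E * B) * p) := by field_simp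
    _ < E * B * (c * log (1 + p * γ / c)) := by gcongr
    _ = E * R := by ring
  have hR : 0 < R :=
    pos_of_mul_pos_right ((by positivity : 0 < D * p).trans hER) hE.le
  refine ⟨p, D / R, hp0, hpP, by positivity, (mul_div_cancel₀ D hR.ne').ge, ?_⟩
  rw [← mul_div_assoc, div_lt_iff₀ hR]
  linarith

theorem exists_forall_le_mul {ι : Type*} [Finite ι] {r : ι → ℝ} (hr : ∀ i, 0 < r i) (D : ℝ) :
    ∃ t, 0 ≤ t ∧ ∀ i, D ≤ r i * t :=
  ((eventually_ge_atTop 0).and <| eventually_all.mpr fun i =>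
    (tendsto_id.const_mul_atTop (hr i)).eventually_ge_atTop D).exists

theorem exists_forall_le_and_div_sq_le {ι : Type*} [Finite ι] (τ A : ι → ℝ) {ε : ι → ℝ}
    (hε : ∀ i, 0 < ε i) : ∃ T, 0 ≤ T ∧ ∀ i, τ i ≤ T ∧ A i / T ^ 2 ≤ ε i :=
  ((eventually_ge_atTop 0).and <| eventually_all.mpr fun i =>
    (eventually_ge_atTop (τ i)).and <|
      ((tendsto_const_nhds.div_atTop (tendsto_pow_atTop two_ne_zero)).eventually
        (gt_mem_nhds (hε i))).mono fun _ => le_of_lt).exists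

section Feasibility

variable {S : ℕ} {σ : Equiv.Perm (Fin S)} {D B Pd Pmax κ K a θ : ℝ} {γ E α τmin : Fin S → ℝ}

theorem SessionFeasible.a_mul_θ_lt_K
    (h : SessionFeasible S σ D B Pd Pmax κ K a θ γ E α τmin) (hS : 1 ≤ S) (hD : 0 < D) :
    a * θ < K := by
  obtain ⟨tdl, tul, Tidle, Kdl, KdlHB, KulHB, Kul, pul, hdl0, hul0, hTi0, hKdl0, -, -, hKp, -, -,
    h19, h20, h21, -, h24⟩ := h
  let j₀ : Fin S := ⟨0, hS⟩
  obtain ⟨ℓ₀, hℓ₀, hpos⟩ : ∃ ℓ ∈ Ici j₀, (0 : ℝ) <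
      Kul (σ j₀) ℓ * B * log (1 + pul (σ j₀) ℓ * γ (σ j₀) / Kul (σ j₀) ℓ) * tul ℓ :=
    exists_lt_of_sum_lt (by simpa using hD.trans_le (h20 j₀))
  have htul : 0 < tul ℓ₀ := (hul0 ℓ₀).lt_of_ne' fun h => by simp [h] at hpos
  have hKul : 0 < Kul (σ j₀) ℓ₀ :=
    (hKp j₀ ℓ₀ (mem_Ici.mp hℓ₀)).1.lt_of_ne' fun h => by simp [h] at hpos
  have hshare : ∀ j ℓ, j ≤ ℓ → Kul (σ j) ℓ + KulHB ℓ ≤ K := fun j ℓ hjℓ => by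
    linarith [h21 ℓ, single_le_sum (f := fun j => Kul (σ j) ℓ)
      (fun i hi => (hKp i ℓ (mem_Iic.mp hi)).1) (mem_Iic.mpr hjℓ)]
  have hdl : ∑ ℓ', KdlHB ℓ' * tdl ℓ' ≤ K * ∑ ℓ', tdl ℓ' := by
    rw [mul_sum]
    exact sum_le_sum fun i _ =>
      mul_le_mul_of_nonneg_right (by linarith [h19 i, hKdl0 i]) (hdl0 i)
  have hul : ∑ ℓ, KulHB ℓ * tul ℓ < K * ∑ ℓ, tul ℓ := by
    rw [mul_sum]
    refine sum_lt_sum (fun ℓ _ => mul_le_mul_of_nonneg_right ?_ (hul0 ℓ))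
      ⟨ℓ₀, mem_univ _, mul_lt_mul_of_pos_right ?_ htul⟩
    · linarith [hshare ℓ ℓ le_rfl, (hKp ℓ ℓ le_rfl).1]
    · linarith [hshare j₀ ℓ₀ (mem_Ici.mp hℓ₀)]
  have htotal : 0 ≤ (∑ ℓ', tdl ℓ') + Tidle + ∑ ℓ, tul ℓ :=
    add_nonneg (add_nonneg (sum_nonneg fun i _ => hdl0 i) hTi0) (sum_nonneg fun i _ => hul0 i)
  exact lt_of_mul_lt_mul_right (by linarith) htotal

theorem SessionFeasible.D_lt_E_mul_B_mul_γ
    (h : SessionFeasible S σ D B Pd Pmax κ K a θ γ E α τmin) (hB : 0 < B) (hκ : 0 < κ)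
    (hγ : ∀ s, 0 < γ s) (hα : ∀ s, 0 < α s) (hτmin : ∀ s, 0 < τmin s) (u : Fin S) :
    D < E u * B * γ u := by
  obtain ⟨tdl, tul, Tidle, Kdl, KdlHB, KulHB, Kul, pul, -, hul0, -, -, -, -, hKp, h16, -, -,
    h20, -, h22, -⟩ := h
  obtain ⟨j, rfl⟩ := σ.surjective u
  have hrate : ∀ ℓ ∈ Ici j,
      Kul (σ j) ℓ * B * log (1 + pul (σ j) ℓ * γ (σ j) / Kul (σ j) ℓ) * tul ℓ ≤
        B * γ (σ j) * (pul (σ j) ℓ * tul ℓ) := by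
    intro ℓ hℓ
    obtain ⟨hK0, hp0, -⟩ := hKp j ℓ (mem_Ici.mp hℓ)
    have hul := hul0 ℓ
    calc _ = B * (Kul (σ j) ℓ * log (1 + pul (σ j) ℓ * γ (σ j) / Kul (σ j) ℓ)) * tul ℓ := by
          ring
      _ ≤ B * (pul (σ j) ℓ * γ (σ j)) * tul ℓ := by
          have := mul_log_one_add_div_le hK0 (mul_nonneg hp0 (hγ (σ j)).le)
          gcongr
      _ = _ := by ring
  have hcp_energy : 0 < κ * α (σ j) ^ 3 /
      ((∑ ℓ ∈ Iio j, tul ℓ) + (∑ ℓ' ∈ Ioi (σ j), tdl ℓ') + Tidle) ^ 2 :=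
    div_pos (mul_pos hκ (pow_pos (hα _) 3)) (pow_pos ((hτmin _).trans_le (h16 j)) 2)
  have hBγ : 0 < B * γ (σ j) := mul_pos hB (hγ _)
  calc D ≤ _ := h20 j
    _ ≤ ∑ ℓ ∈ Ici j, B * γ (σ j) * (pul (σ j) ℓ * tul ℓ) := sum_le_sum hrate
    _ = B * γ (σ j) * ∑ ℓ ∈ Ici j, pul (σ j) ℓ * tul ℓ := (mul_sum _ _ _).symm
    _ < B * γ (σ j) * E (σ j) := by gcongr; linarith [h22 j]
    _ = E (σ j) * B * γ (σ j) := by ring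

theorem sessionFeasible_of_lt (hD : 0 < D) (hB : 0 < B) (hPd : 0 < Pd) (hPmax : 0 < Pmax)
    (hκ : 0 < κ) (ha : 0 < a) (hθ : 0 < θ) (hγ : ∀ s, 0 < γ s) (hα : ∀ s, 0 < α s)
    (hτmin : ∀ s, 0 < τmin s) (hK : a * θ < K) (hDE : ∀ s, D < E s * B * γ s) :
    SessionFeasible S σ D B Pd Pmax κ K a θ γ E α τmin := by
  set c := K - a * θ
  have hc : 0 < c := sub_pos.mpr hK
  choose p t hp0 hpP ht0 hrate henergy using
    fun s => exists_uplink_power_time hc hB (hγ s) hD hPmax (hDE s)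
  obtain ⟨td, htd0, htd⟩ := exists_forall_le_mul (r := fun m => c * B * log (1 + Pd * γ m))
    (fun m => mul_pos (mul_pos hc hB) (log_pos (by nlinarith [hγ m]))) D
  obtain ⟨Ti, hTi0, hTi⟩ := exists_forall_le_and_div_sq_le τmin (fun s => κ * α s ^ 3)
    (fun s => sub_pos.mpr (henergy s))
  have hτcp : ∀ j, Ti ≤ (∑ ℓ ∈ Iio j, t (σ ℓ)) + (∑ _ℓ' ∈ Ioi (σ j), td) + Ti := fun j => by
    linarith [sum_nonneg fun ℓ (_ : ℓ ∈ Iio j) => ht0 (σ ℓ),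
      sum_nonneg fun ℓ' (_ : ℓ' ∈ Ioi (σ j)) => htd0]
  refine ⟨fun _ => td, fun ℓ => t (σ ℓ), Ti, fun _ => c, fun _ => a * θ, fun _ => a * θ,
    fun u ℓ => if u = σ ℓ then c else 0, fun u ℓ => if u = σ ℓ then p u else 0,
    fun _ => htd0, fun ℓ => ht0 _, hTi0, fun _ => hc.le, fun _ => by positivity,
    fun _ => by positivity, fun j ℓ _ => ?_, fun j => (hTi (σ j)).1.trans (hτcp j), fun m => ?_,
    fun m => by simp [c], fun j => ?_, fun ℓ => ?_, fun j => ?_, ?_⟩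
  · dsimp only
    split_ifs
    exacts [⟨hc.le, (hp0 _).le, hpP _⟩, ⟨le_rfl, le_rfl, hPmax.le⟩]
  · exact (htd m).trans (single_le_sum (f := fun i => c * B * log (1 + Pd * γ m) * td)
      (fun _ _ => hD.le.trans (htd m)) (mem_Iic.2 le_rfl))
  · rw [sum_eq_single_of_mem j (mem_Ici.2 le_rfl) fun ℓ _ hℓ => by simp [σ.injective.ne hℓ.symm]]
    simpa using hrate (σ j)
  · rw [sum_eq_single_of_mem ℓ (mem_Iic.2 le_rfl) fun j _ hj => by simp [σ.injective.ne hj]]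
    simp [c]
  · rw [sum_eq_single_of_mem j (mem_Ici.2 le_rfl) fun ℓ _ hℓ => by simp [σ.injective.ne hℓ.symm]]
    have hτ : 0 < Ti := (hτmin (σ j)).trans_le (hTi (σ j)).1
    have := (div_le_div_of_nonneg_left (mul_pos hκ (pow_pos (hα (σ j)) 3)).le (pow_pos hτ 2)
      (pow_le_pow_left₀ hτ.le (hτcp j) 2)).trans (hTi (σ j)).2
    dsimp only
    rw [if_pos rfl]
    linarith
  · simp only [← mul_sum]
    nlinarith [mul_le_mul_of_nonneg_right hK.le hTi0]

end Feasibility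

theorem session_feasibility_general
    (S : ℕ) (hS : 1 ≤ S) (σ : Equiv.Perm (Fin S))
    (D B Pd Pmax κ K a θ : ℝ)
    (γ E α τmin : Fin S → ℝ)
    (hD : 0 < D) (hB : 0 < B) (hPd : 0 < Pd) (hPmax : 0 < Pmax)
    (hκ : 0 < κ) (ha : 0 < a) (hθ : 0 < θ)
    (hγ : ∀ s, 0 < γ s)
    (hα : ∀ s, 0 < α s) (hτmin : ∀ s, 0 < τmin s) :
    (∃ (tdl tul : Fin S → ℝ) (Tidle : ℝ)
       (Kdl KdlHB KulHB : Fin S → ℝ)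
       (Kul pul : Fin S → Fin S → ℝ),
      -- nonnegativity of all variables
      (∀ ℓ', 0 ≤ tdl ℓ') ∧ (∀ ℓ, 0 ≤ tul ℓ) ∧ 0 ≤ Tidle ∧
      (∀ ℓ', 0 ≤ Kdl ℓ') ∧ (∀ ℓ', 0 ≤ KdlHB ℓ') ∧ (∀ ℓ, 0 ≤ KulHB ℓ) ∧
      (∀ j ℓ : Fin S, j ≤ ℓ →
        0 ≤ Kul (σ j) ℓ ∧ 0 ≤ pul (σ j) ℓ ∧ pul (σ j) ℓ ≤ Pmax) ∧
      -- (16) computation-time lower bound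
      (∀ j : Fin S,
        (∑ ℓ ∈ Finset.Iio j, tul ℓ) + (∑ ℓ' ∈ Finset.Ioi (σ j), tdl ℓ') + Tidle
          ≥ τmin (σ j)) ∧
      -- (18) downlink completion
      (∀ m : Fin S,
        (∑ i ∈ Finset.Iic m, Kdl i * B * Real.log (1 + Pd * γ m) * tdl i) ≥ D) ∧
      -- (19) downlink resource-block sharing
      (∀ m : Fin S, Kdl m + KdlHB m ≤ K) ∧
      -- (20) uplink completion
      (∀ j : Fin S,
        (∑ ℓ ∈ Finset.Ici j,
          (Kul (σ j) ℓ * B *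
            Real.log (1 + pul (σ j) ℓ * γ (σ j) / Kul (σ j) ℓ)) * tul ℓ) ≥ D) ∧
      -- (21) uplink resource-block sharing
      (∀ ℓ : Fin S,
        (∑ j ∈ Finset.Iic ℓ, Kul (σ j) ℓ) + KulHB ℓ ≤ K) ∧
      -- (22) energy budget
      (∀ j : Fin S,
        (∑ ℓ ∈ Finset.Ici j, pul (σ j) ℓ * tul ℓ) +
          κ * (α (σ j)) ^ 3 /
            ((∑ ℓ ∈ Finset.Iio j, tul ℓ) +
              (∑ ℓ' ∈ Finset.Ioi (σ j), tdl ℓ') + Tidle) ^ 2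
          ≤ E (σ j)) ∧
      -- (24') high-bandwidth traffic requirement
      ((∑ ℓ', KdlHB ℓ' * tdl ℓ') + (∑ ℓ, KulHB ℓ * tul ℓ) + K * Tidle ≥
        a * θ * ((∑ ℓ', tdl ℓ') + Tidle + (∑ ℓ, tul ℓ))))
    ↔ (K > a * θ ∧ ∀ s, D < E s * B * γ s) := by
  show SessionFeasible S σ D B Pd Pmax κ K a θ γ E α τmin ↔ _
  exact ⟨fun h => ⟨h.a_mul_θ_lt_K hS hD, h.D_lt_E_mul_B_mul_γ hB hκ hγ hα hτmin⟩,
    fun ⟨hKaθ, hDE⟩ => sessionFeasible_of_lt hD hB hPd hPmax hκ ha hθ hγ hα hτmin hKaθ hDE⟩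

/-- Feasibility condition for the session-based problem `(P_σ)`:
the problem is feasible iff `K > a·θ` and `D < E_s·B·γ_s` for every user `s`.
Indices are 0-based: rank `j : Fin S` corresponds to the `(j+1)`-th uplink
session of the paper, and `σ j` is the user starting its uplink at session `j`. -/
theorem session_feasibility
    (S : ℕ) (hS : 1 ≤ S) (σ : Equiv.Perm (Fin S))
    (D B Pd Pmax κ K a θ : ℝ)
    (γ E α τmin : Fin S → ℝ)
    (hD : 0 < D) (hB : 0 < B) (hPd : 0 < Pd) (hPmax : 0 < Pmax)
    (hκ : 0 < κ) (hK : 0 < K) (ha : 0 < a) (hθ : 0 < θ)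
    (hγ : ∀ s, 0 < γ s) (hE : ∀ s, 0 < E s)
    (hα : ∀ s, 0 < α s) (hτmin : ∀ s, 0 < τmin s) :
    (∃ (tdl tul : Fin S → ℝ) (Tidle : ℝ)
       (Kdl KdlHB KulHB : Fin S → ℝ)
       (Kul pul : Fin S → Fin S → ℝ),
      -- nonnegativity of all variables
      (∀ ℓ', 0 ≤ tdl ℓ') ∧ (∀ ℓ, 0 ≤ tul ℓ) ∧ 0 ≤ Tidle ∧
      (∀ ℓ', 0 ≤ Kdl ℓ') ∧ (∀ ℓ', 0 ≤ KdlHB ℓ') ∧ (∀ ℓ, 0 ≤ KulHB ℓ) ∧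
      (∀ j ℓ : Fin S, j ≤ ℓ →
        0 ≤ Kul (σ j) ℓ ∧ 0 ≤ pul (σ j) ℓ ∧ pul (σ j) ℓ ≤ Pmax) ∧
      -- (16) computation-time lower bound
      (∀ j : Fin S,
        (∑ ℓ ∈ Finset.Iio j, tul ℓ) + (∑ ℓ' ∈ Finset.Ioi (σ j), tdl ℓ') + Tidle
          ≥ τmin (σ j)) ∧
      -- (18) downlink completion
      (∀ m : Fin S,
        (∑ i ∈ Finset.Iic m, Kdl i * B * Real.log (1 + Pd * γ m) * tdl i) ≥ D) ∧
      -- (19) downlink resource-block sharing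
      (∀ m : Fin S, Kdl m + KdlHB m ≤ K) ∧
      -- (20) uplink completion
      (∀ j : Fin S,
        (∑ ℓ ∈ Finset.Ici j,
          (Kul (σ j) ℓ * B *
            Real.log (1 + pul (σ j) ℓ * γ (σ j) / Kul (σ j) ℓ)) * tul ℓ) ≥ D) ∧
      -- (21) uplink resource-block sharing
      (∀ ℓ : Fin S,
        (∑ j ∈ Finset.Iic ℓ, Kul (σ j) ℓ) + KulHB ℓ ≤ K) ∧
      -- (22) energy budget
      (∀ j : Fin S,
        (∑ ℓ ∈ Finset.Ici j, pul (σ j) ℓ * tul ℓ) +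
          κ * (α (σ j)) ^ 3 /
            ((∑ ℓ ∈ Finset.Iio j, tul ℓ) +
              (∑ ℓ' ∈ Finset.Ioi (σ j), tdl ℓ') + Tidle) ^ 2
          ≤ E (σ j)) ∧
      -- (24') high-bandwidth traffic requirement
      ((∑ ℓ', KdlHB ℓ' * tdl ℓ') + (∑ ℓ, KulHB ℓ * tul ℓ) + K * Tidle ≥
        a * θ * ((∑ ℓ', tdl ℓ') + Tidle + (∑ ℓ, tul ℓ))))
    ↔ (K > a * θ ∧ ∀ s, D < E s * B * γ s) :=
  session_feasibility_general S hS σ D B Pd Pmax κ K a θ γ E α τmin hD hB hPd hPmax hκ ha hθ hγ hα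
    hτmin
end
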